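/- Let X, Y be square-integrable random variables with Var(Y) ≠ 0 and λ* = Cov(X,Y)/Var(Y). If X = Y almost surely, then λ* = 1 and Var(X - λ*(Y - E[Y])) = 0. More generally, if a family X_ε converges to Y in L², with Var(Y) ≠ 0, then λ*_ε → 1 and Var(X_ε - λ*_ε(Y - E[Y])) → 0 as ε → 0. -/

import Mathlib

/-!
Write `D = X - Y`. Bilinearity gives `Cov(X, Y) = Cov(D, Y) + Var Y` and, for every `c`,
`Var(X - c (Y - 𝔼Y)) = Var D + 2 (1 - c) Cov(D, Y) + (1 - c)² Var Y`.
Since `Var D ≤ ‖D‖₂²` and `|Cov(D, Y)| ≤ √(Var D · Var Y)` (Cauchy–Schwarz, from the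
nonnegativity of the quadratic `t ↦ Var(D - t Y)`), `L²` convergence `D → 0` forces
`λ* - 1 = Cov(D, Y) / Var Y → 0`, and then every term of the variance tends to `0`.
-/

open MeasureTheory ProbabilityTheory Filter

/-- Covariance of two real random variables. -/
noncomputable def cov {Ω : Type*} [MeasurableSpace Ω] (μ : Measure Ω)
    (X Y : Ω → ℝ) : ℝ :=
  ∫ ω, (X ω - ∫ x, X x ∂μ) * (Y ω - ∫ x, Y x ∂μ) ∂μ

open scoped Topology

namespace ProbabilityTheory

variable {Ω ι : Type*} [MeasurableSpace Ω] {μ : Measure Ω} {X Y : Ω → ℝ}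

lemma cov_eq_covariance : cov μ X Y = cov[X, Y; μ] := rfl

lemma variance_fun_sub_const_mul [IsFiniteMeasure μ] (hX : MemLp X 2 μ) (hY : MemLp Y 2 μ)
    (t : ℝ) :
    Var[fun ω ↦ X ω - t * Y ω; μ] = Var[X; μ] - 2 * t * cov[X, Y; μ] + t ^ 2 * Var[Y; μ] := by
  rw [variance_fun_sub hX (hY.const_mul t), covariance_const_mul_right, variance_const_mul]
  ring

lemma sq_covariance_le_variance_mul_variance [IsFiniteMeasure μ] (hX : MemLp X 2 μ)
    (hY : MemLp Y 2 μ) : cov[X, Y; μ] ^ 2 ≤ Var[X; μ] * Var[Y; μ] := by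
  have hdiscr : discrim Var[Y; μ] (-2 * cov[X, Y; μ]) Var[X; μ] ≤ 0 := by
    refine discrim_le_zero fun t ↦ ?_
    have := variance_nonneg (fun ω ↦ X ω - t * Y ω) μ
    rw [variance_fun_sub_const_mul hX hY] at this
    linarith
  rw [discrim] at hdiscr
  nlinarith

lemma abs_covariance_le_sqrt [IsFiniteMeasure μ] (hX : MemLp X 2 μ) (hY : MemLp Y 2 μ) :
    |cov[X, Y; μ]| ≤ √(Var[X; μ] * Var[Y; μ]) :=
  Real.abs_le_sqrt (sq_covariance_le_variance_mul_variance hX hY)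

lemma evariance_le_eLpNorm_sq [IsProbabilityMeasure μ] (hX : AEStronglyMeasurable X μ) :
    evariance X μ ≤ eLpNorm X 2 μ ^ 2 := by
  have h := eLpNorm_nnreal_pow_eq_lintegral (f := X) (μ := μ) (p := 2) two_ne_zero
  simp only [NNReal.coe_ofNat, ENNReal.rpow_two, ENNReal.coe_ofNat] at h
  rw [evariance_def' hX, h]
  exact tsub_le_self

lemma tendsto_variance_zero_of_tendsto_eLpNorm [IsProbabilityMeasure μ] {l : Filter ι}
    {Z : ι → Ω → ℝ} (hZ : ∀ i, AEStronglyMeasurable (Z i) μ)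
    (h : Tendsto (fun i ↦ eLpNorm (Z i) 2 μ) l (𝓝 0)) :
    Tendsto (fun i ↦ Var[Z i; μ]) l (𝓝 0) := by
  have hsq : Tendsto (fun i ↦ eLpNorm (Z i) 2 μ ^ 2) l (𝓝 0) := by
    simpa using ENNReal.Tendsto.pow (n := 2) h
  have hevar : Tendsto (fun i ↦ evariance (Z i) μ) l (𝓝 0) :=
    tendsto_of_tendsto_of_tendsto_of_le_of_le tendsto_const_nhds hsq (fun _ ↦ zero_le)
      fun i ↦ evariance_le_eLpNorm_sq (hZ i)
  exact (ENNReal.tendsto_toReal ENNReal.zero_ne_top).comp hevar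

lemma tendsto_covariance_zero_of_tendsto_variance [IsFiniteMeasure μ] {l : Filter ι}
    {Z : ι → Ω → ℝ} (hZ : ∀ i, MemLp (Z i) 2 μ) (hY : MemLp Y 2 μ)
    (h : Tendsto (fun i ↦ Var[Z i; μ]) l (𝓝 0)) :
    Tendsto (fun i ↦ cov[Z i, Y; μ]) l (𝓝 0) := by
  have hbound : Tendsto (fun i ↦ √(Var[Z i; μ] * Var[Y; μ])) l (𝓝 0) := by
    simpa using ((h.mul_const Var[Y; μ]).sqrt)
  exact squeeze_zero_norm (fun i ↦ abs_covariance_le_sqrt (hZ i) hY) hbound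

lemma covariance_eq_covariance_sub_add_variance [IsFiniteMeasure μ] (hX : MemLp X 2 μ)
    (hY : MemLp Y 2 μ) : cov[X, Y; μ] = cov[X - Y, Y; μ] + Var[Y; μ] := by
  rw [covariance_sub_left hX hY hY, covariance_self hY.aemeasurable]
  ring

lemma variance_sub_mul_sub_integral [IsProbabilityMeasure μ] (hX : MemLp X 2 μ)
    (hY : MemLp Y 2 μ) (c : ℝ) :
    Var[fun ω ↦ X ω - c * (Y ω - μ[Y]); μ] =
      Var[X - Y; μ] + 2 * (1 - c) * cov[X - Y, Y; μ] + (1 - c) ^ 2 * Var[Y; μ] := by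
  have hsplit : (fun ω ↦ X ω - c * (Y ω - μ[Y])) =
      fun ω ↦ ((X - Y) ω + (1 - c) * Y ω) + c * μ[Y] := by
    ext ω
    simp only [Pi.sub_apply]
    ring
  rw [hsplit, variance_add_const (X := fun ω ↦ (X - Y) ω + (1 - c) * Y ω)
      ((hX.sub hY).add (hY.const_mul _)).aestronglyMeasurable,
    variance_fun_add (hX.sub hY) (hY.const_mul _),
    covariance_const_mul_right, variance_const_mul]
  ring

theorem tendsto_optimal_control_variate [IsProbabilityMeasure μ] {l : Filter ι}
    {X : ι → Ω → ℝ} (hX : ∀ i, MemLp (X i) 2 μ) (hY : MemLp Y 2 μ) (hVY : Var[Y; μ] ≠ 0)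
    (hL : Tendsto (fun i ↦ eLpNorm (X i - Y) 2 μ) l (𝓝 0)) :
    Tendsto (fun i ↦ cov μ (X i) Y / Var[Y; μ]) l (𝓝 1) ∧
      Tendsto (fun i ↦ Var[fun ω ↦ X i ω - cov μ (X i) Y / Var[Y; μ] * (Y ω - μ[Y]); μ]) l
        (𝓝 0) := by
  have hvar : Tendsto (fun i ↦ Var[X i - Y; μ]) l (𝓝 0) :=
    tendsto_variance_zero_of_tendsto_eLpNorm (fun i ↦ ((hX i).sub hY).aestronglyMeasurable) hL
  have hcov : Tendsto (fun i ↦ cov[X i - Y, Y; μ]) l (𝓝 0) :=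
    tendsto_covariance_zero_of_tendsto_variance (fun i ↦ (hX i).sub hY) hY hvar
  have hcoeff_eq (i : ι) : cov μ (X i) Y / Var[Y; μ] = cov[X i - Y, Y; μ] / Var[Y; μ] + 1 := by
    rw [cov_eq_covariance, covariance_eq_covariance_sub_add_variance (hX i) hY, add_div,
      div_self hVY]
  have hcoeff : Tendsto (fun i ↦ cov μ (X i) Y / Var[Y; μ]) l (𝓝 1) := by
    simp_rw [hcoeff_eq]
    simpa using (hcov.div_const _).add_const 1
  refine ⟨hcoeff, ?_⟩
  have hdefect : Tendsto (fun i ↦ 1 - cov μ (X i) Y / Var[Y; μ]) l (𝓝 0) := by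
    simpa using hcoeff.const_sub 1
  simp_rw [variance_sub_mul_sub_integral (hX _) hY]
  simpa using (hvar.add ((hdefect.const_mul 2).mul hcov)).add ((hdefect.pow 2).mul_const _)

end ProbabilityTheory

/-- Asymptotic optimality of the control variate coefficient: if `X = Y` a.s.
then `λ* = 1` and the control variate estimator has zero variance; more
generally if `X_ε → Y` in `L²` as `ε → 0⁺`, then `λ*_ε → 1` and the variance
of the control variate estimator tends to `0`. -/
theorem stmt_10 {Ω : Type*} [MeasurableSpace Ω] (μ : Measure Ω)
    [IsProbabilityMeasure μ] (Y : Ω → ℝ) (hY : MemLp Y 2 μ)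
    (hVY : variance Y μ ≠ 0) :
    (∀ X : Ω → ℝ, MemLp X 2 μ → X =ᵐ[μ] Y →
      cov μ X Y / variance Y μ = 1 ∧
      variance (fun ω => X ω - (cov μ X Y / variance Y μ) * (Y ω - ∫ x, Y x ∂μ)) μ = 0) ∧
    (∀ X : ℝ → Ω → ℝ, (∀ ε, MemLp (X ε) 2 μ) →
      Tendsto (fun ε => eLpNorm (fun ω => X ε ω - Y ω) 2 μ)
        (nhdsWithin 0 (Set.Ioi 0)) (nhds 0) →
      Tendsto (fun ε => cov μ (X ε) Y / variance Y μ)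
        (nhdsWithin 0 (Set.Ioi 0)) (nhds 1) ∧
      Tendsto (fun ε =>
          variance (fun ω => X ε ω -
            (cov μ (X ε) Y / variance Y μ) * (Y ω - ∫ x, Y x ∂μ)) μ)
        (nhdsWithin 0 (Set.Ioi 0)) (nhds 0)) := by
  refine ⟨fun X hX hXY ↦ ?_, fun X hX hL ↦ tendsto_optimal_control_variate hX hY hVY hL⟩
  -- `X = Y` a.s. is the constant family at `L²`-distance `0` from `Y`.
  have hdist : X - Y =ᵐ[μ] 0 := by
    filter_upwards [hXY] with ω hω
    simp [hω]
  have hL : Tendsto (fun _ : Unit ↦ eLpNorm (X - Y) 2 μ) ⊤ (𝓝 0) := by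
    simp [eLpNorm_congr_ae hdist]
  obtain ⟨hcoeff, hvar⟩ := tendsto_optimal_control_variate (fun _ ↦ hX) hY hVY hL
  exact ⟨tendsto_const_nhds_iff.mp hcoeff, tendsto_const_nhds_iff.mp hvar⟩
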